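/- The image of the module of Kähler differentials Ω(R/k) in Ω(k(f)/k) equals J̄_f·ω, where J̄_f is the image in R of the Jacobian ideal J_f = (f_X, f_Y)A and ω is the fundamental differential. -/

import Mathlib

open scoped Classical
set_option synthInstance.maxHeartbeats 1000000
set_option maxHeartbeats 4000000

noncomputable section

namespace ZG

/-- The length of a module, defined as the supremum of lengths of chains of proper submodules. -/
noncomputable def mlen (R M : Type*) [Semiring R] [AddCommMonoid M] [Module R M] : ℕ∞ :=
  {N : Submodule R M | N < ⊤}.chainHeight (· < ·)

/-- The conductor of a subalgebra `S ⊆ K` (typically the integral closure of `R`),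
as an ideal of `S`: all `u ∈ S` with `u·S ⊆ R`. -/
def conductorIdeal (R K : Type*) [CommRing R] [CommRing K] [Algebra R K]
    (S : Subalgebra R K) : Ideal S where
  carrier := {u | ∀ w : S, ∃ r : R, (u : K) * (w : K) = algebraMap R K r}
  zero_mem' := fun w => ⟨0, by simp⟩
  add_mem' := by
    rintro a b ha hb w
    obtain ⟨r, hr⟩ := ha w
    obtain ⟨s, hs⟩ := hb w
    refine ⟨r + s, ?_⟩
    push_cast
    rw [add_mul, hr, hs]
  smul_mem' := by
    rintro c a ha w
    obtain ⟨r, hr⟩ := ha (c * w)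
    refine ⟨r, ?_⟩
    rw [smul_eq_mul]
    push_cast at hr ⊢
    linear_combination hr

/-- The conductor of a subalgebra `S ⊆ K` as an ideal of the base ring `R`:
all `r ∈ R` with `r·S ⊆ R`. -/
def conductorIn (R K : Type*) [CommRing R] [CommRing K] [Algebra R K]
    (S : Subalgebra R K) : Ideal R where
  carrier := {r | ∀ w : S, ∃ r' : R, algebraMap R K r * (w : K) = algebraMap R K r'}
  zero_mem' := fun w => ⟨0, by simp⟩
  add_mem' := by
    rintro a b ha hb w
    obtain ⟨r, hr⟩ := ha w
    obtain ⟨s, hs⟩ := hb w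
    exact ⟨r + s, by rw [map_add, add_mul, hr, hs, map_add]⟩
  smul_mem' := by
    rintro c a ha w
    obtain ⟨r', hr'⟩ := ha w
    exact ⟨c * r', by rw [smul_eq_mul, map_mul, mul_assoc, hr', ← map_mul]⟩


/-- A (normalized) discrete valuation of a `k`-algebra `K` (typically a function field),
trivial on `k`.  `v x` is the value of `x ≠ 0`, with the convention `v 0 = 0`. -/
structure DiscVal (k K : Type*) [CommRing k] [CommRing K] [Algebra k K] where
  v : K → ℤ
  v_zero : v 0 = 0
  v_mul : ∀ x y : K, x ≠ 0 → y ≠ 0 → v (x * y) = v x + v y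
  v_add : ∀ x y : K, x ≠ 0 → y ≠ 0 → x + y ≠ 0 → min (v x) (v y) ≤ v (x + y)
  exists_uniformizer : ∃ t : K, t ≠ 0 ∧ v t = 1
  v_const : ∀ c : k, algebraMap k K c ≠ 0 → v (algebraMap k K c) = 0

variable (k : Type) [Field k]

/-- The polynomial ring `A = k[X,Y]`, realized as `MvPolynomial (Fin 2) k`;
the variable `X 0` plays the role of `X` and `X 1` plays the role of `Y`. -/
abbrev P2 := MvPolynomial (Fin 2) k

/-- The Jacobian `J_f(h) = h_X f_Y - h_Y f_X`. -/
def jac (f h : P2 k) : P2 k :=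
  MvPolynomial.pderiv 0 h * MvPolynomial.pderiv 1 f
    - MvPolynomial.pderiv 1 h * MvPolynomial.pderiv 0 f

variable (f : P2 k)

/-- The coordinate ring `R = A/(f)` of the curve `f`. -/
def Crv : Type := P2 k ⧸ Ideal.span {f}

instance : CommRing (Crv k f) := Ideal.Quotient.commRing _
instance : Algebra k (Crv k f) := Ideal.Quotient.algebra k
/-- The canonical projection `φ_f : A → R`. -/
def toCrv : P2 k →+* Crv k f := Ideal.Quotient.mk _

/-- The function field `k(f)` of the curve (the fraction field of `R`). -/
def Fn : Type := FractionRing (Crv k f)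

instance : CommRing (Fn k f) := inferInstanceAs (CommRing (FractionRing (Crv k f)))
instance : Algebra (Crv k f) (Fn k f) :=
  inferInstanceAs (Algebra (Crv k f) (FractionRing (Crv k f)))
instance : Algebra k (Fn k f) := inferInstanceAs (Algebra k (FractionRing (Crv k f)))
instance : IsScalarTower k (Crv k f) (Fn k f) :=
  inferInstanceAs (IsScalarTower k (Crv k f) (FractionRing (Crv k f)))

/-- The canonical map `R → k(f)`. -/
def toFn : Crv k f →+* Fn k f := algebraMap _ _

instance : Module (Fn k f) (Ω[Fn k f⁄k]) :=
  inferInstance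

/-- The integral closure `R̄` of `R` in `k(f)`. -/
def intCl : Subalgebra (Crv k f) (Fn k f) := integralClosure (Crv k f) (Fn k f)

/-- The image `J̄_f ⊆ R` of the Jacobian ideal `J_f = (f_X, f_Y) ⊆ A`. -/
def jacIdealBar : Ideal (Crv k f) :=
  Ideal.map (toCrv k f) (Ideal.span {MvPolynomial.pderiv 0 f, MvPolynomial.pderiv 1 f})

/-- The conductor `𝔠 = 𝔠(R̄,R)`, viewed as an ideal of `R̄`. -/
def condBar : Ideal (intCl k f) := conductorIdeal (Crv k f) (Fn k f) (intCl k f)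

/-- The conductor `𝔠 = 𝔠(R̄,R)`, viewed as an ideal of `R` (recall `𝔠 ⊆ R`). -/
def condCrv : Ideal (Crv k f) := conductorIn (Crv k f) (Fn k f) (intCl k f)

/-- `C(f) = ℓ_R(R̄/𝔠)`, the (global) length of the conductor. -/
def CGlob : ℕ∞ := mlen (Crv k f) ((intCl k f) ⧸ condBar k f)

/-- `Z(f) = ℓ_R(𝔠/J̄_f)`, the (global) Zariski number. -/
def ZGlob : ℕ∞ :=
  mlen (Crv k f) (↥(condCrv k f) ⧸ Submodule.comap (condCrv k f).subtype (jacIdealBar k f))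

/-- `μ(f;A) = dim_k A/(f_X,f_Y)`, the Milnor number of the pencil `(f-a)ₐ`. -/
def muPencil : ℕ∞ :=
  mlen k (P2 k ⧸ Ideal.span {MvPolynomial.pderiv 0 f, MvPolynomial.pderiv 1 f})

/-- `ν(f) = dim_k A/(f, f_X,f_Y)`, the (global affine) Tjurina number. -/
def nuGlob : ℕ∞ :=
  mlen k (P2 k ⧸ Ideal.span {f, MvPolynomial.pderiv 0 f, MvPolynomial.pderiv 1 f})

/-- `J_f(u) = j` for `u, j ∈ k(f)`: the Jacobian of `u`, computed by the quotient rule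
from a representation `u = g(x,y)/h(x,y)`. -/
def jacRel (u j : Fn k f) : Prop :=
  ∃ g h : P2 k, toFn k f (toCrv k f h) ≠ 0 ∧
    u * toFn k f (toCrv k f h) = toFn k f (toCrv k f g) ∧
    j * (toFn k f (toCrv k f h)) ^ 2 =
      toFn k f (toCrv k f (jac k f g)) * toFn k f (toCrv k f h)
        - toFn k f (toCrv k f g) * toFn k f (toCrv k f (jac k f h))

/-- `ω` is the fundamental differential of `f`, i.e. `ω = du / J_f(u)` for one
(equivalently, any) nonconstant `u`; here expressed as `J_f(u) • ω = du` for a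
nonconstant `u = g(x,y) ∈ R` (nonconstancy being `du ≠ 0` in characteristic zero). -/
def isFundDiff (ω : Ω[Fn k f⁄k]) : Prop :=
  ∃ g : P2 k, KaehlerDifferential.D k (Fn k f) (toFn k f (toCrv k f g)) ≠ 0 ∧
    toFn k f (toCrv k f (jac k f g)) • ω =
      KaehlerDifferential.D k (Fn k f) (toFn k f (toCrv k f g))

/-- The image of `Ω(R,k)` in `Ω(k(f),k)`: the `R`-submodule generated by all `a·db`, `a,b ∈ R`. -/
def OmegaCrv : Submodule (Crv k f) (Ω[Fn k f⁄k]) :=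
  Submodule.span (Crv k f)
    {p | ∃ a b : Crv k f, p = toFn k f a • KaehlerDifferential.D k (Fn k f) (toFn k f b)}

/-- The image of `Ω(R̄,k)` in `Ω(k(f),k)`: the `R`-submodule generated by all `a·db`, `a,b ∈ R̄`. -/
def OmegaBar : Submodule (Crv k f) (Ω[Fn k f⁄k]) :=
  Submodule.span (Crv k f)
    {p | ∃ a b : intCl k f,
      p = (a : Fn k f) • KaehlerDifferential.D k (Fn k f) (b : Fn k f)}

/-- `ℓ_R(Ω(R̄,k)/Ω(R,k))`. -/
def lenOmegaQuot : ℕ∞ :=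
  mlen (Crv k f) (↥(OmegaBar k f) ⧸ Submodule.comap (OmegaBar k f).subtype (OmegaCrv k f))

/-- `ℓ_R(R̄/R)`. -/
def lenBarModCrv : ℕ∞ :=
  mlen (Crv k f) ((intCl k f) ⧸ LinearMap.range (Algebra.linearMap (Crv k f) (intCl k f)))

/-- `ℓ_R(R/𝔠)`. -/
def lenCrvModCond : ℕ∞ := mlen (Crv k f) (Crv k f ⧸ condCrv k f)


/-- The local Milnor number `μ(g;Q) = ℓ(A_Q/(g_X,g_Y)A_Q)`. -/
def muLoc (g : P2 k) (Q : Ideal (P2 k)) (hQ : Q.IsPrime) : ℕ∞ :=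
  letI := hQ
  mlen (Localization.AtPrime Q)
    (Localization.AtPrime Q ⧸ Ideal.map (algebraMap (P2 k) (Localization.AtPrime Q))
      (Ideal.span {MvPolynomial.pderiv 0 g, MvPolynomial.pderiv 1 g}))

/-- The local Tjurina number `ν(f;Q) = ℓ(A_Q/(f,f_X,f_Y)A_Q)`. -/
def nuLoc (f : P2 k) (Q : Ideal (P2 k)) (hQ : Q.IsPrime) : ℕ∞ :=
  letI := hQ
  mlen (Localization.AtPrime Q)
    (Localization.AtPrime Q ⧸ Ideal.map (algebraMap (P2 k) (Localization.AtPrime Q))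
      (Ideal.span {f, MvPolynomial.pderiv 0 f, MvPolynomial.pderiv 1 f}))

/-- The number of branches `χ(f;Q)` of `f` at `Q`: the number of maximal ideals of the
integral closure of the local ring `R_{Q'} = A_Q/(f)A_Q` of the curve at `Q`. -/
def chiLoc (f : P2 k) (Q : Ideal (P2 k)) (hQ : Q.IsPrime) : ℕ :=
  letI := hQ
  let Rq : Type := Localization.AtPrime Q ⧸
    Ideal.map (algebraMap (P2 k) (Localization.AtPrime Q)) (Ideal.span {f})
  letI : CommRing Rq := Ideal.Quotient.commRing _
  letI : CommRing (FractionRing Rq) := inferInstance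
  letI : Algebra Rq (FractionRing Rq) := inferInstance
  Nat.card {m : Ideal (integralClosure Rq (FractionRing Rq)) // m.IsMaximal}

/-- The local conductor length `C(f;Q) = ℓ(R̄_{Q'}/𝔠(f;Q))`. -/
def CLoc (f : P2 k) (Q : Ideal (P2 k)) (hQ : Q.IsPrime) : ℕ∞ :=
  letI := hQ
  let Rq : Type := Localization.AtPrime Q ⧸
    Ideal.map (algebraMap (P2 k) (Localization.AtPrime Q)) (Ideal.span {f})
  letI : CommRing Rq := Ideal.Quotient.commRing _
  letI : CommRing (FractionRing Rq) := inferInstance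
  letI : Algebra Rq (FractionRing Rq) := inferInstance
  mlen Rq ((integralClosure Rq (FractionRing Rq)) ⧸
    conductorIdeal Rq (FractionRing Rq) (integralClosure Rq (FractionRing Rq)))

/-- The local Zariski number `Z(f;Q) = ℓ(𝔠(f;Q)/J̄_f R_{Q'})`. -/
def ZLoc (f : P2 k) (Q : Ideal (P2 k)) (hQ : Q.IsPrime) : ℕ∞ :=
  letI := hQ
  let Rq : Type := Localization.AtPrime Q ⧸
    Ideal.map (algebraMap (P2 k) (Localization.AtPrime Q)) (Ideal.span {f})
  letI : CommRing Rq := Ideal.Quotient.commRing _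
  letI : CommRing (FractionRing Rq) := inferInstance
  letI : Algebra Rq (FractionRing Rq) := inferInstance
  let cq : Ideal Rq := conductorIn Rq (FractionRing Rq) (integralClosure Rq (FractionRing Rq))
  let jq : Ideal Rq := Ideal.map
    ((Ideal.Quotient.mk _).comp (algebraMap (P2 k) (Localization.AtPrime Q)))
    (Ideal.span {MvPolynomial.pderiv 0 f, MvPolynomial.pderiv 1 f})
  mlen Rq (↥cq ⧸ Submodule.comap cq.subtype jq)

/-- The points (maximal ideals of `A`) through which the curve `g` passes. -/
def ptsOn (g : P2 k) : Type := {Q : Ideal (P2 k) // Q.IsMaximal ∧ g ∈ Q}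

/-- The (affine) Milnor number `μ(g) = Σ_Q μ(g;Q)`. -/
def muSum (g : P2 k) : ℕ∞ := ∑ᶠ Q : ptsOn k g, muLoc k g Q.1 Q.2.1.isPrime

/-- The (affine) Tjurina number `ν(f) = Σ_Q ν(f;Q)` (sum of the local ones). -/
def nuSum (f : P2 k) : ℕ∞ := ∑ᶠ Q : ptsOn k f, nuLoc k f Q.1 Q.2.1.isPrime

/-- The (affine) defect `δ(f) = Σ_Q δ(f;Q) = Σ_Q (μ(f;Q) - ν(f;Q))`. -/
def deltaSum (f : P2 k) : ℕ∞ :=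
  ∑ᶠ Q : ptsOn k f, (muLoc k f Q.1 Q.2.1.isPrime - nuLoc k f Q.1 Q.2.1.isPrime)

/-- `χ̄(f) = Σ_Q (χ(f;Q) - 1)`. -/
def chibarSum (f : P2 k) : ℕ∞ :=
  ∑ᶠ Q : ptsOn k f, ((chiLoc k f Q.1 Q.2.1.isPrime - 1 : ℕ) : ℕ∞)

/-- `C(f) = Σ_Q C(f;Q)`. -/
def CSum (f : P2 k) : ℕ∞ := ∑ᶠ Q : ptsOn k f, CLoc k f Q.1 Q.2.1.isPrime

/-- `Z(f) = Σ_Q Z(f;Q)`. -/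
def ZSum (f : P2 k) : ℕ∞ := ∑ᶠ Q : ptsOn k f, ZLoc k f Q.1 Q.2.1.isPrime


/-- `f` has one place at infinity: there is exactly one valuation of `k(f)` over `k`
whose valuation ring does not contain the coordinate ring `R`. -/
def OnePlaceAtInfinity : Prop :=
  ∃! w : DiscVal k (Fn k f), ∃ r : Crv k f, r ≠ 0 ∧ w.v (toFn k f r) < 0

/-- `w` is the valuation at infinity of the curve `f`. -/
def IsPlaceAtInfinity (w : DiscVal k (Fn k f)) : Prop :=
  ∃ r : Crv k f, r ≠ 0 ∧ w.v (toFn k f r) < 0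

/-- `f` is a rational (polynomial) curve: it admits a polynomial parametrization. -/
def IsRationalCurve : Prop :=
  ∃ p q : Polynomial k, (p.natDegree ≠ 0 ∨ q.natDegree ≠ 0) ∧
    MvPolynomial.aeval ![p, q] f = 0

/-- The semigroup `Γ(f)` of values of the valuation `w` on nonzero elements of `R`. -/
def GammaSg (w : DiscVal k (Fn k f)) : Set ℤ :=
  {z | ∃ r : Crv k f, r ≠ 0 ∧ w.v (toFn k f r) = z}

/-- `c` is the conductor of the sub-semigroup `Γ ⊆ ℤ`: every integer `≤ c` belongs
to `Γ` and `c+1 ∉ Γ`. -/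
def IsSgConductor (Γ : Set ℤ) (c : ℤ) : Prop :=
  (∀ z : ℤ, z ≤ c → z ∈ Γ) ∧ c + 1 ∉ Γ

/-!
By the chain rule `d(g(x,y)) = g_X dx + g_Y dy`, while `f(x,y) = 0` gives `f_X dx + f_Y dy = 0`.
Together they force `J_f(g) dg₀ = J_f(g₀) dg` for all `g, g₀ ∈ A`, so `dg = J_f(g) ω` as soon as
`dg₀ = J_f(g₀) ω ≠ 0`. Hence every generator `a dg` of `Ω(R/k)` lies in `J̄_f ω`; conversely the
generators `f_Y ω = dx` and `f_X ω = -dy` of `J̄_f ω` lie in `Ω(R/k)`.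
-/

open MvPolynomial

theorem derivation_algHom_eq_sum_pderiv {R A M σ : Type*} [CommRing R] [CommRing A] [Algebra R A]
    [AddCommGroup M] [Module A M] [Module R M] [IsScalarTower R A M] [Fintype σ]
    (D : Derivation R A M) (φ : MvPolynomial σ R →ₐ[R] A) (p : MvPolynomial σ R) :
    D (φ p) = ∑ i, φ (pderiv i p) • D (φ (X i)) := by
  induction p using MvPolynomial.induction_on with
  | C a => simp
  | add p q hp hq => simp only [map_add, hp, hq, add_smul, Finset.sum_add_distrib]
  | mul_X p j hp =>
    simp only [map_mul, Derivation.leibniz, hp, Finset.smul_sum, smul_smul, pderiv_X,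
      Pi.single_apply, smul_eq_mul, map_add, add_smul, Finset.sum_add_distrib, mul_ite, mul_one,
      mul_zero, apply_ite φ, map_zero, ite_smul, zero_smul, Finset.sum_ite_eq, Finset.mem_univ,
      if_true]

theorem jac_smul_D_comm {A M : Type*} [CommRing A] [Algebra k A] [AddCommGroup M] [Module A M]
    [Module k M] [IsScalarTower k A M] (D : Derivation k A M) (φ : P2 k →ₐ[k] A) (hφ : φ f = 0)
    (g g₀ : P2 k) : φ (jac k f g) • D (φ g₀) = φ (jac k f g₀) • D (φ g) := by
  have hdf : φ (pderiv 0 f) • D (φ (X 0)) + φ (pderiv 1 f) • D (φ (X 1)) = 0 := by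
    rw [← Fin.sum_univ_two (fun i => φ (pderiv i f) • D (φ (X i))),
      ← derivation_algHom_eq_sum_pderiv, hφ, map_zero]
  rw [derivation_algHom_eq_sum_pderiv D φ g, derivation_algHom_eq_sum_pderiv D φ g₀]
  simp only [jac, map_sub, map_mul, Fin.sum_univ_two]
  linear_combination (norm := module)
    (φ (pderiv 0 g) * φ (pderiv 1 g₀) - φ (pderiv 0 g₀) * φ (pderiv 1 g)) • hdf

theorem D_eq_jac_smul {K M : Type*} [Field K] [Algebra k K] [AddCommGroup M] [Module K M]
    [Module k M] [IsScalarTower k K M] (D : Derivation k K M) (φ : P2 k →ₐ[k] K) (hφ : φ f = 0)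
    (ω : M) (g₀ : P2 k) (hg₀ : D (φ g₀) ≠ 0) (hω : φ (jac k f g₀) • ω = D (φ g₀)) (g : P2 k) :
    D (φ g) = φ (jac k f g) • ω := by
  have hjac₀ : φ (jac k f g₀) ≠ 0 := by
    rintro h
    exact hg₀ (by rw [← hω, h, zero_smul])
  apply smul_right_injective M hjac₀
  dsimp only
  rw [← jac_smul_D_comm k f D φ hφ, ← hω, smul_comm]

theorem jac_mem_span_pderiv (g : P2 k) : jac k f g ∈ Ideal.span {pderiv 0 f, pderiv 1 f} :=
  sub_mem (Ideal.mul_mem_left _ _ (Ideal.subset_span (by simp)))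
    (Ideal.mul_mem_left _ _ (Ideal.subset_span (by simp)))

theorem jac_X_zero : jac k f (X 0) = pderiv 1 f := by
  simp [jac, pderiv_X]

theorem jac_X_one : jac k f (X 1) = -pderiv 0 f := by
  simp [jac, pderiv_X]

theorem isDomain_crv (hf : Irreducible f) : IsDomain (Crv k f) :=
  have : (Ideal.span {f}).IsPrime := (Ideal.span_singleton_prime hf.ne_zero).mpr hf.prime
  Ideal.Quotient.isDomain _

theorem toCrv_surjective : Function.Surjective (toCrv k f) := Ideal.Quotient.mk_surjective

theorem toCrv_self : toCrv k f f = 0 :=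
  Ideal.Quotient.eq_zero_iff_mem.mpr (Ideal.mem_span_singleton_self f)

theorem toFn_smul (j : Crv k f) (m : Ω[Fn k f⁄k]) : toFn k f j • m = j • m :=
  algebraMap_smul (Fn k f) j m

/-- The coordinate map `A → k(f)`, `g ↦ g(x, y)`. -/
def evalFn : P2 k →ₐ[k] Fn k f :=
  (IsScalarTower.toAlgHom k (Crv k f) (Fn k f)).comp (Ideal.Quotient.mkₐ k (Ideal.span {f}))

theorem evalFn_apply (g : P2 k) : evalFn k f g = toFn k f (toCrv k f g) := rfl

theorem D_toFn_toCrv_eq_jac_smul (hf : Irreducible f) (ω : Ω[Fn k f⁄k])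
    (hω : isFundDiff k f ω) (g : P2 k) :
    KaehlerDifferential.D k (Fn k f) (toFn k f (toCrv k f g)) = toCrv k f (jac k f g) • ω := by
  have := isDomain_crv k f hf
  let _ : Field (Fn k f) := inferInstanceAs (Field (FractionRing (Crv k f)))
  obtain ⟨g₀, hg₀, hω⟩ := hω
  have hf₀ : evalFn k f f = 0 := by rw [evalFn_apply, toCrv_self, map_zero]
  rw [← toFn_smul, ← evalFn_apply, ← evalFn_apply]
  exact D_eq_jac_smul k f _ _ hf₀ ω g₀ hg₀ hω g

theorem D_toFn_mem_omegaCrv (b : Crv k f) :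
    KaehlerDifferential.D k (Fn k f) (toFn k f b) ∈ OmegaCrv k f :=
  Submodule.subset_span ⟨1, b, by rw [map_one, one_smul]⟩

theorem statement2 (hf : Irreducible f)
    (ω : Ω[Fn k f⁄k]) (hω : isFundDiff k f ω) :
    (OmegaCrv k f : Set (Ω[Fn k f⁄k])) =
      {p | ∃ j : Crv k f, j ∈ jacIdealBar k f ∧ p = toFn k f j • ω} := by
  have hD := D_toFn_toCrv_eq_jac_smul k f hf ω hω
  suffices OmegaCrv k f =
      Submodule.map (LinearMap.toSpanSingleton (Crv k f) _ ω) (jacIdealBar k f) by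
    ext p
    simp [this, toFn_smul, eq_comm]
  apply le_antisymm
  · refine Submodule.span_le.mpr ?_
    rintro _ ⟨a, b, rfl⟩
    obtain ⟨g, rfl⟩ := toCrv_surjective k f b
    refine ⟨a * toCrv k f (jac k f g),
      Ideal.mul_mem_left _ a (Ideal.mem_map_of_mem _ (jac_mem_span_pderiv k f g)), ?_⟩
    rw [LinearMap.toSpanSingleton_apply, hD, toFn_smul, smul_smul]
  · rw [Submodule.map_le_iff_le_comap, jacIdealBar, Ideal.map_le_iff_le_comap, Ideal.span_le,
      Set.insert_subset_iff, Set.singleton_subset_iff]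
    constructor
    · have := neg_mem (D_toFn_mem_omegaCrv k f (toCrv k f (X 1)))
      rwa [hD, jac_X_one, map_neg, neg_smul, neg_neg] at this
    · have := D_toFn_mem_omegaCrv k f (toCrv k f (X 0))
      rwa [hD, jac_X_zero] at this

end ZG
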